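/- Let G be a group satisfying (H1) and (H2), and let H, K ∈ L(G) with C_G(H) = C_G(K). Then there exists D ∈ L(G) such that H ∩ D = 1, K ∩ D = 1, and each of the subgroups ⟨H, D⟩ and ⟨K, D⟩ contains the derived subgroup of some finite-index subgroup of G. -/

import Mathlib

/-!
Let `N` be a finite-index normal subgroup normalizing `H` and `K`, and
`D = C(H ∩ N) ∩ C(K ∩ N)`, which lies in `L(G)`. By (H1), `H ∩ C(K ∩ N) = 1`: it lies in `L(G)`,
and by the three subgroup lemma the derived subgroup of its finite-index subgroup
`H ∩ C(K ∩ N) ∩ N` centralizes `K`, hence `H`, so that subgroup is metabelian. Symmetrically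
`K ∩ C(H ∩ N) = 1`, so `D` meets `H` and `K` trivially.

A minimal nontrivial intersection `B` of conjugates of `H`, `K` and `N` is normalized by `N` and,
by (H1), lies in `N`; by minimality every conjugate of `B` either lies in or meets trivially each
of `H` and `K`. Subgroups of `N` normalized by `N` that meet trivially commute, so in each of the
four cases the conjugate of `B` lies in `(H ∩ K) ⊔ D`. Hence so does the normal closure of `B`,
which by (H2) contains `[G₀, G₀]` for some finite-index `G₀`.
-/

variable {G : Type*} [Group G]

/-- The conjugate `B ^ g = g⁻¹ * B * g` of a subgroup `B` by an element `g`. -/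
def conjBy (B : Subgroup G) (g : G) : Subgroup G :=
  B.map (MulAut.conj g⁻¹).toMonoidHom

/-- A subgroup is virtually solvable if it has a solvable subgroup of finite index. -/
def VirtSolvable (H : Subgroup G) : Prop :=
  ∃ M : Subgroup G, M ≤ H ∧ M.relIndex H ≠ 0 ∧ IsSolvable ↥M

/-- A subgroup is virtually nilpotent if it has a nilpotent subgroup of finite index. -/
def VirtNilpotent (H : Subgroup G) : Prop :=
  ∃ M : Subgroup G, M ≤ H ∧ M.relIndex H ≠ 0 ∧ Group.IsNilpotent ↥M

/-- Hypothesis (H1): every virtually solvable subgroup whose normalizer has finite index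
(i.e. belonging to `L(G)`) is trivial. -/
def HypH1 (G : Type*) [Group G] : Prop :=
  ∀ H : Subgroup G, (Subgroup.normalizer (H : Set G)).FiniteIndex → VirtSolvable H → H = ⊥

/-- Hypothesis (H2): every nontrivial normal subgroup of `G` contains the derived subgroup
of some finite-index subgroup of `G`. -/
def HypH2 (G : Type*) [Group G] : Prop :=
  ∀ N : Subgroup G, N.Normal → N ≠ ⊥ →
    ∃ G₀ : Subgroup G, G₀.FiniteIndex ∧ ⁅G₀, G₀⁆ ≤ N

/-- `VA K H` means `K ≤va H`: `K ≤ H` and `K` contains the derived subgroup of some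
finite-index subgroup of `H`. -/
def VA (K H : Subgroup G) : Prop :=
  K ≤ H ∧ ∃ A : Subgroup G, A ≤ H ∧ A.relIndex H ≠ 0 ∧ ⁅A, A⁆ ≤ K

/-- A subgroup `B` is basal if its normalizer has finite index and every conjugate of `B`
either equals `B` or meets `B` trivially. -/
def IsBasal (B : Subgroup G) : Prop :=
  (Subgroup.normalizer (B : Set G)).FiniteIndex ∧ ∀ g : G, conjBy B g = B ∨ conjBy B g ⊓ B = ⊥

/-- The rigid normalizer `R(A)` of a basal subgroup `A`: the intersection of the
normalizers of all basal subgroups meeting `A` trivially. -/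
def rigidNormalizer (A : Subgroup G) : Subgroup G :=
  ⨅ B ∈ {B : Subgroup G | IsBasal B ∧ A ⊓ B = ⊥}, (Subgroup.normalizer (B : Set G))

open Subgroup

lemma mem_conjBy {B : Subgroup G} {g x : G} : x ∈ conjBy B g ↔ g * x * g⁻¹ ∈ B := by
  rw [conjBy, mem_map_equiv]; simp

lemma conjBy_one (B : Subgroup G) : conjBy B 1 = B := by
  ext x; simp [mem_conjBy]

lemma conjBy_conjBy (B : Subgroup G) (g h : G) : conjBy (conjBy B g) h = conjBy B (g * h) := by
  ext x; simp [mem_conjBy, mul_assoc]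

lemma conjBy_mono {A B : Subgroup G} (h : A ≤ B) (g : G) : conjBy A g ≤ conjBy B g :=
  map_mono h

lemma conjBy_bot (g : G) : conjBy ⊥ g = ⊥ :=
  map_bot _

lemma conjBy_inf (A B : Subgroup G) (g : G) : conjBy (A ⊓ B) g = conjBy A g ⊓ conjBy B g := by
  ext x; simp [mem_conjBy]

lemma conjBy_sInf (S : Set (Subgroup G)) (g : G) :
    conjBy (sInf S) g = sInf ((conjBy · g) '' S) := by
  ext x; simp [mem_conjBy, mem_sInf]

lemma conjBy_eq_self_of_mem_normalizer {B : Subgroup G} {g : G} (h : g ∈ normalizer (B : Set G)) :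
    conjBy B g = B := by
  ext x; rw [mem_conjBy]; exact (mem_normalizer_iff.mp h x).symm

lemma conjBy_eq_self_of_normal (N : Subgroup G) [N.Normal] (g : G) : conjBy N g = N :=
  conjBy_eq_self_of_mem_normalizer (le_normalizer_of_normal (K := ⊤) trivial)

lemma normalizer_conjBy (B : Subgroup G) (g : G) :
    normalizer (conjBy B g : Set G) = conjBy (normalizer (B : Set G)) g :=
  (map_equiv_normalizer_eq B _).symm

lemma le_normalizer_conjBy {N B : Subgroup G} [N.Normal] (h : N ≤ normalizer (B : Set G)) (g : G) :
    N ≤ normalizer (conjBy B g : Set G) := by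
  rw [normalizer_conjBy, ← conjBy_eq_self_of_normal N g]
  exact conjBy_mono h g

lemma finite_range_conjBy {L : Subgroup G} [(normalizer (L : Set G)).FiniteIndex] :
    (Set.range (conjBy L)).Finite := by
  have hcoset (a b : G) (hab : a⁻¹ * b ∈ normalizer (L : Set G)) : conjBy L a⁻¹ = conjBy L b⁻¹ := by
    calc conjBy L a⁻¹ = conjBy (conjBy L (a⁻¹ * b)) b⁻¹ := by
          rw [conjBy_conjBy, mul_inv_cancel_right]
      _ = conjBy L b⁻¹ := by rw [conjBy_eq_self_of_mem_normalizer hab]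
  let φ : G ⧸ normalizer (L : Set G) → Subgroup G :=
    Quotient.lift (fun g => conjBy L g⁻¹) fun a b hab =>
      hcoset a b (QuotientGroup.leftRel_apply.mp hab)
  refine (Set.finite_range φ).subset ?_
  rintro _ ⟨g, rfl⟩
  exact ⟨QuotientGroup.mk g⁻¹, by simp [φ]⟩

lemma normalClosure_le_of_forall_conjBy_le {E T : Subgroup G} (h : ∀ g, conjBy E g ≤ T) :
    normalClosure (E : Set G) ≤ T := by
  refine closure_le _ |>.mpr fun y hy => ?_
  obtain ⟨x, hx, hxy⟩ := Group.mem_conjugatesOfSet_iff.mp hy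
  obtain ⟨c, rfl⟩ := isConj_iff.mp hxy
  exact h c⁻¹ (mem_conjBy.mpr (by simpa [mul_assoc] using hx))

lemma le_normalizer_sInf {C : Subgroup G} {S : Set (Subgroup G)}
    (h : ∀ L ∈ S, C ≤ normalizer (L : Set G)) : C ≤ normalizer (sInf S : Subgroup G) := by
  rw [sInf_eq_iInf']
  exact (le_iInf fun L : S => h L L.2).trans (iInf_normalizer_le_normalizer_iInf _)

lemma normalizer_le_normalizer_centralizer (A : Subgroup G) :
    normalizer (A : Set G) ≤ normalizer (centralizer (A : Set G) : Subgroup G) := by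
  have hconj {g : G} (hg : g ∈ normalizer (A : Set G)) {x : G} (hx : x ∈ centralizer (A : Set G)) :
      g * x * g⁻¹ ∈ centralizer (A : Set G) := by
    rw [mem_centralizer_iff] at hx ⊢
    intro y hy
    have := congrArg (g * · * g⁻¹) (hx _ ((mem_normalizer_iff''.mp hg y).mp hy))
    simpa [mul_assoc] using this
  intro g hg
  refine mem_normalizer_iff.mpr fun x => ⟨hconj hg, fun hx => ?_⟩
  simpa [mul_assoc] using hconj (inv_mem hg) hx

lemma le_normalizer_centralizer_inf {M B N : Subgroup G} [N.Normal]
    (h : M ≤ normalizer (B : Set G)) :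
    M ≤ normalizer (centralizer (B ⊓ N : Subgroup G) : Subgroup G) :=
  ((le_inf h le_normalizer_of_normal).trans inf_normalizer_le_normalizer_inf).trans
    (normalizer_le_normalizer_centralizer _)

lemma commutator_le_inf_of_le_normalizer {A B : Subgroup G} (hA : A ≤ normalizer (B : Set G))
    (hB : B ≤ normalizer (A : Set G)) : ⁅A, B⁆ ≤ A ⊓ B :=
  le_inf (le_normalizer_iff_commutator_le_left.mp hB) (le_normalizer_iff_commutator_le_right.mp hA)

lemma isSolvable_of_commutator_commutator_eq_bot {M : Subgroup G} (h : ⁅⁅M, M⁆, ⁅M, M⁆⁆ = ⊥) :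
    Group.IsSolvable M := by
  refine ⟨2, (map_eq_bot_iff_of_injective _ M.subtype_injective).mp ?_⟩
  rw [derivedSeries_succ, map_commutator, derivedSeries_one, map_subtype_commutator, h]

lemma virtSolvable_of_isSolvable_inf {A N : Subgroup G} [N.FiniteIndex]
    (h : Group.IsSolvable ↥(A ⊓ N)) : VirtSolvable A :=
  ⟨A ⊓ N, inf_le_left,
    by rw [inf_relIndex_left]; exact isFiniteRelIndex_of_finiteIndex.relIndex_ne_zero, h⟩

lemma commutator_inf_le_centralizer {B N : Subgroup G} [N.Normal]
    (hNB : N ≤ normalizer (B : Set G)) :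
    ⁅centralizer (B ⊓ N : Subgroup G) ⊓ N, centralizer (B ⊓ N : Subgroup G) ⊓ N⁆ ≤
      centralizer (B : Set G) := by
  set X := centralizer (B ⊓ N : Subgroup G) ⊓ N
  have hXB : ⁅X, B⁆ ≤ B ⊓ N :=
    le_inf (le_normalizer_iff_commutator_le_right.mp (inf_le_right.trans hNB))
      ((commutator_mono inf_le_right le_rfl).trans (commutator_le_left N B))
  have hXBX : ⁅⁅X, B⁆, X⁆ = ⊥ :=
    commutator_eq_bot_iff_le_centralizer.mpr (hXB.trans (le_centralizer_iff.mp inf_le_left))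
  have hBXX : ⁅⁅B, X⁆, X⁆ = ⊥ := by rwa [commutator_comm B X]
  exact commutator_eq_bot_iff_le_centralizer.mp (commutator_commutator_eq_bot_of_rotate hXBX hBXX)

lemma inf_centralizer_inf_eq_bot (hH1 : HypH1 G) {A B N : Subgroup G} [N.Normal] [N.FiniteIndex]
    [(normalizer (A : Set G)).FiniteIndex] (hNB : N ≤ normalizer (B : Set G))
    (hC : centralizer (A : Set G) = centralizer (B : Set G)) :
    A ⊓ centralizer (B ⊓ N : Subgroup G) = ⊥ := by
  set Z := A ⊓ centralizer (B ⊓ N : Subgroup G)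
  have hZ : (normalizer (Z : Set G)).FiniteIndex :=
    finiteIndex_of_le <| (inf_le_inf le_rfl (le_normalizer_centralizer_inf hNB)).trans
      inf_normalizer_le_normalizer_inf
  refine hH1 Z hZ (virtSolvable_of_isSolvable_inf (N := N) ?_)
  apply isSolvable_of_commutator_commutator_eq_bot
  rw [commutator_eq_bot_iff_le_centralizer]
  have hMA : ⁅Z ⊓ N, Z ⊓ N⁆ ≤ A := (commutator_le_self _).trans (inf_le_left.trans inf_le_left)
  have hCA : ⁅Z ⊓ N, Z ⊓ N⁆ ≤ centralizer (A : Set G) := by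
    have hZN : Z ⊓ N ≤ centralizer (B ⊓ N : Subgroup G) ⊓ N := inf_le_inf_right N inf_le_right
    exact hC ▸ (commutator_mono hZN hZN).trans (commutator_inf_le_centralizer hNB)
  exact hCA.trans (centralizer_le hMA)

lemma exists_ne_bot_forall_conjBy_le_or_inf_eq_bot {I : Set (Subgroup G)} (hfin : I.Finite)
    (hinf : ∀ A ∈ I, ∀ B ∈ I, A ⊓ B ∈ I) (hconj : ∀ A ∈ I, ∀ g, conjBy A g ∈ I)
    (hne : ∃ A ∈ I, A ≠ ⊥) :
    ∃ B ∈ I, B ≠ ⊥ ∧ ∀ g, ∀ L ∈ I, conjBy B g ≤ L ∨ conjBy B g ⊓ L = ⊥ := by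
  obtain ⟨B, ⟨hBI, hB⟩, hmin⟩ := (hfin.sep (· ≠ ⊥)).exists_minimal hne
  refine ⟨B, hBI, hB, fun g L hL => or_iff_not_imp_right.mpr fun hBL => ?_⟩
  have hconj_inf : conjBy (B ⊓ conjBy L g⁻¹) g = conjBy B g ⊓ L := by
    rw [conjBy_inf, conjBy_conjBy, inv_mul_cancel, conjBy_one]
  have hmem : B ⊓ conjBy L g⁻¹ ∈ {A ∈ I | A ≠ ⊥} :=
    ⟨hinf B hBI _ (hconj L hL g⁻¹), fun h => hBL (by rw [← hconj_inf, h, conjBy_bot])⟩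
  have hle : B ≤ conjBy L g⁻¹ := (hmin hmem inf_le_left).trans inf_le_right
  simpa only [conjBy_conjBy, inv_mul_cancel, conjBy_one] using conjBy_mono hle g

lemma exists_ne_bot_le_normal_forall_conjBy_le_or_inf_eq_bot [Nontrivial G] (hH1 : HypH1 G)
    {N : Subgroup G} [N.Normal] [N.FiniteIndex] {F : Set (Subgroup G)} (hF : F.Finite)
    (hFconj : ∀ L ∈ F, ∀ g, conjBy L g ∈ F) (hFN : ∀ L ∈ F, N ≤ normalizer (L : Set G)) :
    ∃ B ≠ ⊥, B ≤ N ∧ N ≤ normalizer (B : Set G) ∧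
      ∀ g, ∀ L ∈ F, conjBy B g ≤ L ∨ conjBy B g ⊓ L = ⊥ := by
  have hFconj' : ∀ L ∈ insert N F, ∀ g, conjBy L g ∈ insert N F := by
    rintro L (rfl | hL) g
    · exact Or.inl (conjBy_eq_self_of_normal _ g)
    · exact Or.inr (hFconj L hL g)
  have hFN' : ∀ L ∈ insert N F, N ≤ normalizer (L : Set G) := by
    rintro L (rfl | hL)
    · exact le_normalizer_of_normal
    · exact hFN L hL
  obtain ⟨_, ⟨S, hS, rfl⟩, hS0, hdich⟩ := exists_ne_bot_forall_conjBy_le_or_inf_eq_bot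
    (I := sInf '' 𝒫 (insert N F)) ((hF.insert N).finite_subsets.image sInf)
    (by rintro _ ⟨S, hS, rfl⟩ _ ⟨T, hT, rfl⟩; exact ⟨S ∪ T, Set.union_subset hS hT, sInf_union⟩)
    (by
      rintro _ ⟨S, hS, rfl⟩ g
      exact ⟨_, Set.image_subset_iff.mpr fun L hL => hFconj' L (hS hL) g, (conjBy_sInf S g).symm⟩)
    ⟨⊤, ⟨∅, Set.empty_subset _, sInf_empty⟩, top_ne_bot⟩
  have hsingleton {L : Subgroup G} (hL : L ∈ insert N F) : L ∈ sInf '' 𝒫 (insert N F) :=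
    ⟨{L}, Set.singleton_subset_iff.mpr hL, sInf_singleton⟩
  have hNS : N ≤ normalizer (sInf S : Subgroup G) := le_normalizer_sInf fun L hL => hFN' L (hS hL)
  refine ⟨sInf S, hS0, ?_, hNS, fun g L hL => hdich g L (hsingleton (Or.inr hL))⟩
  rcases hdich 1 N (hsingleton (Or.inl rfl)) with h | h <;> rw [conjBy_one] at h
  · exact h
  · refine absurd (hH1 _ (finiteIndex_of_le hNS) (virtSolvable_of_isSolvable_inf (N := N) ?_)) hS0
    rw [h]
    infer_instance

lemma le_centralizer_inf_of_inf_eq_bot {E L N : Subgroup G} [N.Normal] (hEN : E ≤ N)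
    (hNE : N ≤ normalizer (E : Set G)) (hNL : N ≤ normalizer (L : Set G)) (h : E ⊓ L = ⊥) :
    E ≤ centralizer (L ⊓ N : Subgroup G) := by
  rw [← commutator_eq_bot_iff_le_centralizer, eq_bot_iff, ← h]
  have hE : E ≤ normalizer (L ⊓ N : Subgroup G) :=
    hEN.trans ((le_inf hNL le_normalizer_of_normal).trans inf_normalizer_le_normalizer_inf)
  exact (commutator_le_inf_of_le_normalizer hE (inf_le_right.trans hNE)).trans
    (inf_le_inf_left E inf_le_left)

lemma exists_commutator_le_inf_sup_centralizer (hH1 : HypH1 G) (hH2 : HypH2 G)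
    {H K N : Subgroup G} [N.Normal] [N.FiniteIndex] [(normalizer (H : Set G)).FiniteIndex]
    [(normalizer (K : Set G)).FiniteIndex]
    (hNH : N ≤ normalizer (H : Set G)) (hNK : N ≤ normalizer (K : Set G))
    (hHK : H ⊓ centralizer (K ⊓ N : Subgroup G) = ⊥)
    (hKH : K ⊓ centralizer (H ⊓ N : Subgroup G) = ⊥) :
    ∃ G₀ : Subgroup G, G₀.FiniteIndex ∧ ⁅G₀, G₀⁆ ≤
      H ⊓ K ⊔ centralizer (H ⊓ N : Subgroup G) ⊓ centralizer (K ⊓ N : Subgroup G) := by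
  rcases subsingleton_or_nontrivial G with _ | _
  · exact ⟨⊤, inferInstance, le_of_eq (Subsingleton.elim _ _)⟩
  obtain ⟨B, hB0, hBN, hNB, hdich⟩ := exists_ne_bot_le_normal_forall_conjBy_le_or_inf_eq_bot hH1
    (F := Set.range (conjBy H) ∪ Set.range (conjBy K)) (N := N)
    (finite_range_conjBy.union finite_range_conjBy)
    (by
      rintro _ (⟨a, rfl⟩ | ⟨a, rfl⟩) g
      · exact Or.inl ⟨a * g, (conjBy_conjBy H a g).symm⟩
      · exact Or.inr ⟨a * g, (conjBy_conjBy K a g).symm⟩)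
    (by
      rintro _ (⟨a, rfl⟩ | ⟨a, rfl⟩)
      · exact le_normalizer_conjBy hNH a
      · exact le_normalizer_conjBy hNK a)
  have hB : normalClosure (B : Set G) ≠ ⊥ :=
    fun h => hB0 (eq_bot_iff.mpr (h ▸ subset_normalClosure))
  obtain ⟨G₀, hG₀, hG₀B⟩ := hH2 _ normalClosure_normal hB
  refine ⟨G₀, hG₀, hG₀B.trans (normalClosure_le_of_forall_conjBy_le fun g => ?_)⟩
  have hEN : conjBy B g ≤ N := conjBy_eq_self_of_normal N g ▸ conjBy_mono hBN g
  have hNE : N ≤ normalizer (conjBy B g : Set G) := le_normalizer_conjBy hNB g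
  rcases hdich g H (Or.inl ⟨1, conjBy_one H⟩) with hEH | hEH <;>
    rcases hdich g K (Or.inr ⟨1, conjBy_one K⟩) with hEK | hEK
  · exact le_sup_of_le_left (le_inf hEH hEK)
  · exact (le_inf hEH (le_centralizer_inf_of_inf_eq_bot hEN hNE hNK hEK)).trans hHK.le |>.trans bot_le
  · exact (le_inf hEK (le_centralizer_inf_of_inf_eq_bot hEN hNE hNH hEH)).trans hKH.le |>.trans bot_le
  · exact le_sup_of_le_right (le_inf (le_centralizer_inf_of_inf_eq_bot hEN hNE hNH hEH)
      (le_centralizer_inf_of_inf_eq_bot hEN hNE hNK hEK))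

theorem statement5 (hH1 : HypH1 G) (hH2 : HypH2 G) (H K : Subgroup G)
    (hHL : (Subgroup.normalizer (H : Set G)).FiniteIndex) (hKL : (Subgroup.normalizer (K : Set G)).FiniteIndex)
    (hC : Subgroup.centralizer (H : Set G) = Subgroup.centralizer (K : Set G)) :
    ∃ D : Subgroup G, (Subgroup.normalizer (D : Set G)).FiniteIndex ∧ H ⊓ D = ⊥ ∧ K ⊓ D = ⊥ ∧
      (∃ G₀ : Subgroup G, G₀.FiniteIndex ∧ ⁅G₀, G₀⁆ ≤ H ⊔ D) ∧
      (∃ G₁ : Subgroup G, G₁.FiniteIndex ∧ ⁅G₁, G₁⁆ ≤ K ⊔ D) := by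
  set N := (normalizer (H : Set G) ⊓ normalizer (K : Set G)).normalCore
  have hNH : N ≤ normalizer (H : Set G) := (normalCore_le _).trans inf_le_left
  have hNK : N ≤ normalizer (K : Set G) := (normalCore_le _).trans inf_le_right
  have hHK := inf_centralizer_inf_eq_bot hH1 hNK hC
  have hKH := inf_centralizer_inf_eq_bot hH1 hNH hC.symm
  obtain ⟨G₀, hG₀, hG₀D⟩ := exists_commutator_le_inf_sup_centralizer hH1 hH2 hNH hNK hHK hKH
  refine ⟨centralizer (H ⊓ N : Subgroup G) ⊓ centralizer (K ⊓ N : Subgroup G), ?_, ?_, ?_,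
    ⟨G₀, hG₀, hG₀D.trans (sup_le_sup_right inf_le_left _)⟩,
    ⟨G₀, hG₀, hG₀D.trans (sup_le_sup_right inf_le_right _)⟩⟩
  · exact finiteIndex_of_le <| (inf_le_inf (le_normalizer_centralizer_inf le_rfl)
      (le_normalizer_centralizer_inf le_rfl)).trans inf_normalizer_le_normalizer_inf
  · exact eq_bot_iff.mpr <| hHK ▸ inf_le_inf_left H inf_le_right
  · exact eq_bot_iff.mpr <| hKH ▸ inf_le_inf_left K inf_le_left
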